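/- arXiv:1012.2950 — 2 statements merged into one kernel-verified Lean document; each statement's English description precedes it below -/
import Mathlib

section
/- Let G be a connected graph on n > 3d vertices with minimum degree at least d. Suppose there exist vertices u, v with dist(u,v) = 3 such that B_4(u) ≠ V(G), B_4(v) ≠ V(G), and B_2(u) ∪ B_2(v) = V(G). Then the degree sum of G^4 is at least (7/3)d·n. -/
/-!
Write `A = B₂(u)`, `B = B₂(v)`, `R = A ∩ B`, and let `Q = A \ B`, `P = B \ A` be the two lunes,
so that `V = Q ⊔ R ⊔ P`. In `G⁴` a vertex of `R` sees all of `V`, a vertex of `Q` sees all of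
`A`, and a vertex of `Q` within distance `3` of `v` also sees the vertices of `P` within
distance `1` of `v` (symmetrically for `P`). Summing these closed degrees bounds `∑ deg_{G⁴}`
from below by a quadratic expression in the sizes of the regions. Closed neighbourhoods have at
least `d + 1` vertices, which gives linear constraints on these sizes: the neighbour of `u` on a
`u`–`v` geodesic has its closed neighbourhood in `R ∪ Q₃` (where `Q₃ = Q ∩ B₃(v)`), a vertex at
distance `≥ 5` from `v` has it in `Q \ Q₃`, and `N(u)`, `N(v)` are disjoint subsets of
`R ∪ (Q ∩ B₁(u)) ∪ (P ∩ B₁(v))`. Under these constraints the quadratic expression is at least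
`(7/3) d n`.
-/

/-- The `k`-th power of a simple graph `G`: two distinct vertices are adjacent
iff their distance in `G` is at most `k`. -/
def SimpleGraph.power {V : Type*} (G : SimpleGraph V) (k : ℕ) : SimpleGraph V where
  Adj u v := u ≠ v ∧ G.dist u v ≤ k
  symm := ⟨fun u v h => ⟨h.1.symm, by rw [SimpleGraph.dist_comm]; exact h.2⟩⟩
  loopless := ⟨fun v h => h.1 rfl⟩

lemma Set.sum_indicator_const {ι M : Type*} [Fintype ι] [AddCommMonoid M] (s : Set ι) (c : M) :
    ∑ i, s.indicator (fun _ => c) i = s.ncard • c := by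
  classical
  simp [Set.indicator_apply, Finset.sum_ite, Set.ncard_eq_toFinset_card']

/-- In the application `q, p, r` are `|Q|, |P|, |R|`, `c, b` are `|Q₃|, |P ∩ B₃(u)|`, and
`g, h` are `|Q ∩ B₁(u)|, |P ∩ B₁(v)|`. -/
lemma seven_mul_add_three_mul_le {q p r c b g h d : ℕ}
    (hc : d + 1 ≤ r + c) (hb : d + 1 ≤ r + b) (hq : d + 1 + c ≤ q) (hp : d + 1 + b ≤ p)
    (hgh : d + d ≤ r + g + h) :
    7 * d * (q + p + r) + 3 * (q + p + r) ≤
      3 * (r * (q + p + r) + (q * (r + q) + c * h) + (p * (r + p) + b * g)) := by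
  wlog hcb : c ≤ b generalizing q p c b g h
  · have := this (g := h) (h := g) hb hc hp hq (by omega) (by omega)
    linarith
  nlinarith [Nat.mul_le_mul_left g hcb, Nat.mul_le_mul_left c hgh]

namespace SimpleGraph

variable {V : Type*} {G : SimpleGraph V}

lemma Connected.exists_dist_eq_of_dist_eq_add (hG : G.Connected) {a b : V} {i j : ℕ}
    (h : G.dist a b = i + j) : ∃ z, G.dist a z = i ∧ G.dist z b = j := by
  obtain ⟨p, hp⟩ := hG.exists_walk_length_eq_dist a b
  have h₁ := dist_le (p.take i)
  have h₂ := dist_le (p.drop i)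
  have := hG.dist_triangle (u := a) (v := p.getVert i) (w := b)
  rw [Walk.take_length] at h₁
  rw [Walk.drop_length] at h₂
  exact ⟨p.getVert i, by omega, by omega⟩

variable (G) in
/-- Between unreachable vertices `G.dist` is `0`, so this is a ball only when `G` is connected. -/
def closedBall (c : V) (r : ℕ) : Set V := {w | G.dist w c ≤ r}

@[simp]
lemma mem_closedBall {c w : V} {r : ℕ} : w ∈ G.closedBall c r ↔ G.dist w c ≤ r := Iff.rfl

lemma mem_closedBall_comm {c w : V} {r : ℕ} : w ∈ G.closedBall c r ↔ c ∈ G.closedBall w r := by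
  simp [dist_comm]

lemma closedBall_mono {c : V} {r s : ℕ} (h : r ≤ s) : G.closedBall c r ⊆ G.closedBall c s :=
  fun _ hw => le_trans hw h

lemma Connected.mem_closedBall_add (hG : G.Connected) {c w z : V} {r s : ℕ}
    (hw : w ∈ G.closedBall z r) (hz : z ∈ G.closedBall c s) : w ∈ G.closedBall c (r + s) :=
  hG.dist_triangle.trans (add_le_add hw hz)

lemma ncard_neighborSet_add_one_le [Finite V] {z : V} {s : Set V} (h : G.closedBall z 1 ⊆ s) :
    (G.neighborSet z).ncard + 1 ≤ s.ncard := by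
  rw [← Set.ncard_insert_of_notMem G.notMem_neighborSet_self]
  refine Set.ncard_le_ncard (Set.insert_subset (h (by simp)) fun t ht => h ?_)
  simp [dist_comm, dist_eq_one_iff_adj.2 ht]

lemma ncard_le_ncard_neighborSet_power_add_one [Finite V] {k : ℕ} {w : V} {s : Set V}
    (h : s ⊆ G.closedBall w k) : s.ncard ≤ ((G.power k).neighborSet w).ncard + 1 := by
  refine (Set.ncard_le_ncard fun t ht => ?_).trans (Set.ncard_insert_le w _)
  by_cases htw : t = w
  · exact .inl htw
  · exact .inr ⟨Ne.symm htw, mem_closedBall_comm.1 (h ht)⟩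

section Lune

variable {u v : V}

variable (G) in
def lune (u v : V) : Set V := G.closedBall u 2 \ G.closedBall v 2

lemma mem_lune {w : V} : w ∈ G.lune u v ↔ w ∈ G.closedBall u 2 ∧ w ∉ G.closedBall v 2 := Iff.rfl

lemma ncard_inter_add_ncard_lune [Finite V] :
    (G.closedBall u 2 ∩ G.closedBall v 2).ncard + (G.lune u v).ncard = (G.closedBall u 2).ncard :=
  Set.ncard_inter_add_ncard_sdiff_eq_ncard _ _

lemma ncard_lune_add_ncard_lune_add_ncard_inter [Finite V]
    (hcov : G.closedBall u 2 ∪ G.closedBall v 2 = Set.univ) :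
    (G.lune u v).ncard + (G.lune v u).ncard + (G.closedBall u 2 ∩ G.closedBall v 2).ncard =
      Nat.card V := by
  have hN := Set.ncard_union_add_ncard_inter (G.closedBall u 2) (G.closedBall v 2)
  have hA := ncard_inter_add_ncard_lune (G := G) (u := u) (v := v)
  have hB := ncard_inter_add_ncard_lune (G := G) (u := v) (v := u)
  rw [hcov, Set.ncard_univ] at hN
  rw [Set.inter_comm] at hB
  omega

lemma neighborSet_subset_inter_union_lune_inter :
    G.neighborSet u ⊆
      (G.closedBall u 2 ∩ G.closedBall v 2) ∪ (G.lune u v ∩ G.closedBall u 1) := by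
  intro t ht
  have htu : t ∈ G.closedBall u 1 := by simp [dist_comm, dist_eq_one_iff_adj.2 ht]
  by_cases htv : t ∈ G.closedBall v 2
  · exact .inl ⟨closedBall_mono one_le_two htu, htv⟩
  · exact .inr ⟨⟨closedBall_mono one_le_two htu, htv⟩, htu⟩

variable (G) in
/-- A lower bound for the closed degree in `G.power 4` of a vertex `w ∈ G.lune u v`. -/
noncomputable def luneWeight (u v w : V) : ℕ :=
  (G.lune u v).indicator (fun _ => (G.closedBall u 2).ncard) w +
    (G.lune u v ∩ G.closedBall v 3).indicator (fun _ => (G.lune v u ∩ G.closedBall v 1).ncard) w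

lemma luneWeight_of_notMem {w : V} (hw : w ∉ G.lune u v) : G.luneWeight u v w = 0 := by
  simp [luneWeight, hw]

lemma sum_luneWeight [Fintype V] :
    ∑ w, G.luneWeight u v w = (G.lune u v).ncard * (G.closedBall u 2).ncard +
      (G.lune u v ∩ G.closedBall v 3).ncard * (G.lune v u ∩ G.closedBall v 1).ncard := by
  simp [luneWeight, Finset.sum_add_distrib, Set.sum_indicator_const]

section Connected

variable [Finite V] (hG : G.Connected)
include hG

lemma Connected.ncard_neighborSet_add_ncard_neighborSet_le (huv : G.dist u v = 3) :
    (G.neighborSet u).ncard + (G.neighborSet v).ncard ≤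
      (G.closedBall u 2 ∩ G.closedBall v 2).ncard + (G.lune u v ∩ G.closedBall u 1).ncard +
        (G.lune v u ∩ G.closedBall v 1).ncard := by
  have hdisj : Disjoint (G.neighborSet u) (G.neighborSet v) := by
    refine Set.disjoint_left.2 fun t htu htv => ?_
    have := hG.dist_triangle (u := u) (v := t) (w := v)
    rw [dist_eq_one_iff_adj.2 htu, dist_eq_one_iff_adj.2 htv.symm] at this
    omega
  have hsub : G.neighborSet u ∪ G.neighborSet v ⊆ (G.closedBall u 2 ∩ G.closedBall v 2) ∪
      (G.lune u v ∩ G.closedBall u 1) ∪ (G.lune v u ∩ G.closedBall v 1) := by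
    rintro t (ht | ht)
    · rcases neighborSet_subset_inter_union_lune_inter ht with h | h
      exacts [.inl (.inl h), .inl (.inr h)]
    · rcases neighborSet_subset_inter_union_lune_inter ht with h | h
      exacts [.inl (.inl h.symm), .inr h]
  rw [← Set.ncard_union_eq hdisj]
  exact (Set.ncard_le_ncard hsub).trans
    ((Set.ncard_union_le _ _).trans (Nat.add_le_add_right (Set.ncard_union_le _ _) _))

lemma Connected.ncard_neighborSet_add_one_le_of_mem_closedBall {z : V}
    (hzu : z ∈ G.closedBall u 1) (hzv : z ∈ G.closedBall v 2) :
    (G.neighborSet z).ncard + 1 ≤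
      (G.closedBall u 2 ∩ G.closedBall v 2).ncard + (G.lune u v ∩ G.closedBall v 3).ncard := by
  refine (ncard_neighborSet_add_one_le fun t ht => ?_).trans (Set.ncard_union_le _ _)
  have htu : t ∈ G.closedBall u 2 := hG.mem_closedBall_add ht hzu
  by_cases htv : t ∈ G.closedBall v 2
  · exact .inl ⟨htu, htv⟩
  · exact .inr ⟨⟨htu, htv⟩, hG.mem_closedBall_add ht hzv⟩

lemma Connected.ncard_neighborSet_add_one_add_ncard_le_ncard_lune
    (hcov : G.closedBall u 2 ∪ G.closedBall v 2 = Set.univ) {z : V}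
    (hz : z ∉ G.closedBall v 4) :
    (G.neighborSet z).ncard + 1 + (G.lune u v ∩ G.closedBall v 3).ncard ≤
      (G.lune u v).ncard := by
  rw [← Set.ncard_sdiff_add_ncard_of_subset (t := G.lune u v) Set.inter_subset_left]
  refine Nat.add_le_add_right (ncard_neighborSet_add_one_le fun t ht => ?_) _
  have htv : t ∉ G.closedBall v 3 := fun htv =>
    hz (hG.mem_closedBall_add (mem_closedBall_comm.1 ht) htv)
  have htv₂ : t ∉ G.closedBall v 2 := fun h => htv (closedBall_mono (by norm_num) h)
  have htu : t ∈ G.closedBall u 2 := (hcov ▸ Set.mem_univ t).resolve_right htv₂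
  exact ⟨⟨htu, htv₂⟩, fun h => htv h.2⟩

lemma Connected.card_le_ncard_neighborSet_power_add_one
    (hcov : G.closedBall u 2 ∪ G.closedBall v 2 = Set.univ) {w : V}
    (hw : w ∈ G.closedBall u 2 ∩ G.closedBall v 2) :
    Nat.card V ≤ ((G.power 4).neighborSet w).ncard + 1 := by
  rw [← Set.ncard_univ]
  refine ncard_le_ncard_neighborSet_power_add_one fun t _ => ?_
  rcases hcov ▸ Set.mem_univ t with ht | ht
  exacts [hG.mem_closedBall_add ht (mem_closedBall_comm.1 hw.1),
    hG.mem_closedBall_add ht (mem_closedBall_comm.1 hw.2)]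

lemma Connected.ncard_closedBall_le_ncard_neighborSet_power_add_one {w : V}
    (hw : w ∈ G.lune u v) :
    (G.closedBall u 2).ncard ≤ ((G.power 4).neighborSet w).ncard + 1 :=
  ncard_le_ncard_neighborSet_power_add_one fun _ ht =>
    hG.mem_closedBall_add ht (mem_closedBall_comm.1 hw.1)

lemma Connected.ncard_closedBall_add_ncard_le_ncard_neighborSet_power_add_one {w : V}
    (hw : w ∈ G.lune u v ∩ G.closedBall v 3) :
    (G.closedBall u 2).ncard + (G.lune v u ∩ G.closedBall v 1).ncard ≤
      ((G.power 4).neighborSet w).ncard + 1 := by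
  have hdisj : Disjoint (G.closedBall u 2) (G.lune v u ∩ G.closedBall v 1) :=
    Set.disjoint_left.2 fun _ ht ht' => ht'.1.2 ht
  rw [← Set.ncard_union_eq hdisj]
  refine ncard_le_ncard_neighborSet_power_add_one ?_
  rintro t (ht | ht)
  exacts [hG.mem_closedBall_add ht (mem_closedBall_comm.1 hw.1.1),
    hG.mem_closedBall_add ht.2 (mem_closedBall_comm.1 hw.2)]

lemma Connected.luneWeight_le {w : V} (hw : w ∈ G.lune u v) :
    G.luneWeight u v w ≤ ((G.power 4).neighborSet w).ncard + 1 := by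
  rw [luneWeight, Set.indicator_of_mem hw]
  by_cases hw₃ : w ∈ G.closedBall v 3
  · rw [Set.indicator_of_mem (Set.mem_inter hw hw₃)]
    exact hG.ncard_closedBall_add_ncard_le_ncard_neighborSet_power_add_one ⟨hw, hw₃⟩
  · rw [Set.indicator_of_notMem fun h => hw₃ h.2, add_zero]
    exact hG.ncard_closedBall_le_ncard_neighborSet_power_add_one hw

end Connected

lemma Connected.le_sum_ncard_neighborSet_power_four_add_card [Fintype V] (hG : G.Connected)
    (hcov : G.closedBall u 2 ∪ G.closedBall v 2 = Set.univ) :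
    (G.closedBall u 2 ∩ G.closedBall v 2).ncard * Nat.card V +
        ((G.lune u v).ncard *
            ((G.closedBall u 2 ∩ G.closedBall v 2).ncard + (G.lune u v).ncard) +
          (G.lune u v ∩ G.closedBall v 3).ncard * (G.lune v u ∩ G.closedBall v 1).ncard) +
        ((G.lune v u).ncard *
            ((G.closedBall u 2 ∩ G.closedBall v 2).ncard + (G.lune v u).ncard) +
          (G.lune v u ∩ G.closedBall u 3).ncard * (G.lune u v ∩ G.closedBall u 1).ncard) ≤
      ∑ w, ((G.power 4).neighborSet w).ncard + Nat.card V := by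
  rw [ncard_inter_add_ncard_lune, Set.inter_comm, ncard_inter_add_ncard_lune, Set.inter_comm]
  calc _ = ∑ w, ((G.closedBall u 2 ∩ G.closedBall v 2).indicator (fun _ => Nat.card V) w +
          G.luneWeight u v w + G.luneWeight v u w) := by
        simp only [Finset.sum_add_distrib, Set.sum_indicator_const, sum_luneWeight, smul_eq_mul]
    _ ≤ ∑ w, (((G.power 4).neighborSet w).ncard + 1) := Finset.sum_le_sum fun w _ => ?_
    _ = _ := by simp [Finset.sum_add_distrib]
  by_cases hu : w ∈ G.closedBall u 2 <;> by_cases hv : w ∈ G.closedBall v 2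
  · rw [Set.indicator_of_mem (Set.mem_inter hu hv), luneWeight_of_notMem fun h => h.2 hv,
      luneWeight_of_notMem fun h => h.2 hu]
    exact hG.card_le_ncard_neighborSet_power_add_one hcov ⟨hu, hv⟩
  · rw [Set.indicator_of_notMem fun h => hv h.2, luneWeight_of_notMem fun h => hv h.1]
    simpa using hG.luneWeight_le (mem_lune.2 ⟨hu, hv⟩)
  · rw [Set.indicator_of_notMem fun h => hu h.1, luneWeight_of_notMem fun h => hu h.1]
    simpa using hG.luneWeight_le (mem_lune.2 ⟨hv, hu⟩)
  · exact ((hcov ▸ Set.mem_univ w : w ∈ _ ∪ _).elim hu hv).elim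

end Lune

end SimpleGraph

theorem avg_degree_fourth_power_special_general {V : Type*} [Fintype V] (G : SimpleGraph V) (d : ℕ)
    (hconn : G.Connected) (hmin : ∀ v : V, d ≤ (G.neighborSet v).ncard)
    (u v : V) (huv : G.dist u v = 3)
    (hu4 : {w : V | G.dist w u ≤ 4} ≠ Set.univ)
    (hv4 : {w : V | G.dist w v ≤ 4} ≠ Set.univ)
    (hcov : {w : V | G.dist w u ≤ 2} ∪ {w : V | G.dist w v ≤ 2} = Set.univ) :
    (7 / 3 * d * Fintype.card V : ℝ) ≤ ∑ w : V, (((G.power 4).neighborSet w).ncard : ℝ) := by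
  replace hcov : G.closedBall u 2 ∪ G.closedBall v 2 = Set.univ := hcov
  obtain ⟨p₁, hp₁u, hp₁v⟩ := hconn.exists_dist_eq_of_dist_eq_add (i := 1) (j := 2) huv
  obtain ⟨p₂, hp₂u, hp₂v⟩ := hconn.exists_dist_eq_of_dist_eq_add (i := 2) (j := 1) huv
  obtain ⟨x, hx⟩ := (Set.ne_univ_iff_exists_notMem _).1 hu4
  obtain ⟨y, hy⟩ := (Set.ne_univ_iff_exists_notMem _).1 hv4
  have hR₁ := hconn.ncard_neighborSet_add_one_le_of_mem_closedBall (u := u)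
    (by simp [SimpleGraph.dist_comm, hp₁u]) hp₁v.le
  have hR₂ := hconn.ncard_neighborSet_add_one_le_of_mem_closedBall (v := u)
    hp₂v.le (by simp [SimpleGraph.dist_comm, hp₂u])
  rw [Set.inter_comm] at hR₂
  have hQ := hconn.ncard_neighborSet_add_one_add_ncard_le_ncard_lune hcov hy
  have hP := hconn.ncard_neighborSet_add_one_add_ncard_le_ncard_lune (Set.union_comm _ _ ▸ hcov) hx
  have huv' := hconn.ncard_neighborSet_add_ncard_neighborSet_le huv
  have key := seven_mul_add_three_mul_le (d := d) (le_trans (by linarith [hmin p₁]) hR₁)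
    (le_trans (by linarith [hmin p₂]) hR₂) (le_trans (by linarith [hmin y]) hQ)
    (le_trans (by linarith [hmin x]) hP) (le_trans (by linarith [hmin u, hmin v]) huv')
  rw [SimpleGraph.ncard_lune_add_ncard_lune_add_ncard_inter hcov] at key
  have hsum := hconn.le_sum_ncard_neighborSet_power_four_add_card hcov
  have hnat : 7 * d * Nat.card V ≤ 3 * ∑ w, ((G.power 4).neighborSet w).ncard := by linarith
  rw [Nat.card_eq_fintype_card] at hnat
  have hreal : (7 * d * Fintype.card V : ℝ) ≤
      3 * ∑ w, (((G.power 4).neighborSet w).ncard : ℝ) := by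
    exact_mod_cast hnat
  linarith

theorem avg_degree_fourth_power_special {V : Type*} [Fintype V] (G : SimpleGraph V) (d : ℕ)
    (hconn : G.Connected) (hmin : ∀ v : V, d ≤ (G.neighborSet v).ncard)
    (hn : 3 * d < Fintype.card V) (u v : V) (huv : G.dist u v = 3)
    (hu4 : {w : V | G.dist w u ≤ 4} ≠ Set.univ)
    (hv4 : {w : V | G.dist w v ≤ 4} ≠ Set.univ)
    (hcov : {w : V | G.dist w u ≤ 2} ∪ {w : V | G.dist w v ≤ 2} = Set.univ) :
    (7 / 3 * d * Fintype.card V : ℝ) ≤ ∑ w : V, (((G.power 4).neighborSet w).ncard : ℝ) :=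
  avg_degree_fourth_power_special_general G d hconn hmin u v huv hu4 hv4 hcov
end

section
/- Let G be a connected vertex-transitive d-regular graph and let k be a positive integer with k < diam(G). Then every vertex of G^k has degree at least (2k+1)(d+1)/3 − 1, and hence G^k has average degree at least (2k+1)(d+1)/3 − 1. -/
open Set

namespace SimpleGraph

variable {V V' : Type*} (G : SimpleGraph V) {G' : SimpleGraph V'}

def IsVertexTransitive : Prop := ∀ u v : V, ∃ φ : G ≃g G, φ u = v

def vertexBoundary (X : Set V) : Set V := {v | v ∉ X ∧ ∃ u ∈ X, G.Adj u v}

def exterior (X : Set V) : Set V := (X ∪ G.vertexBoundary X)ᶜ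

def IsCutSide (X : Set V) : Prop := X.Nonempty ∧ (G.exterior X).Nonempty

/-- The vertex connectivity of `G`, unless `G` has no cut side (e.g. `G` is complete): then it is
`sInf ∅ = 0`. -/
noncomputable def vertexConnectivity : ℕ :=
  sInf {n | ∃ X, G.IsCutSide X ∧ (G.vertexBoundary X).ncard = n}

def IsFragment (X : Set V) : Prop :=
  G.IsCutSide X ∧ (G.vertexBoundary X).ncard = G.vertexConnectivity

noncomputable def atomSize : ℕ := sInf {n | ∃ X, G.IsFragment X ∧ X.ncard = n}

def IsAtom (X : Set V) : Prop := G.IsFragment X ∧ X.ncard = G.atomSize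

def sphere (v : V) (i : ℕ) : Set V := {u | G.dist v u = i}

variable {G} {X A B F : Set V}

lemma mem_exterior {x : V} : x ∈ G.exterior X ↔ x ∉ X ∧ x ∉ G.vertexBoundary X := by
  simp [exterior]

lemma disjoint_vertexBoundary (X : Set V) : Disjoint X (G.vertexBoundary X) :=
  Set.disjoint_left.2 fun _ hx hb => hb.1 hx

lemma disjoint_exterior (X : Set V) : Disjoint X (G.exterior X) :=
  Set.disjoint_left.2 fun _ hx hb => (mem_exterior.1 hb).1 hx

lemma disjoint_vertexBoundary_exterior (X : Set V) :
    Disjoint (G.vertexBoundary X) (G.exterior X) :=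
  Set.disjoint_left.2 fun _ hx hb => (mem_exterior.1 hb).2 hx

lemma ncard_inter_add_ncard_inter_vertexBoundary_add_ncard_inter_exterior [Finite V]
    (S X : Set V) :
    (S ∩ X).ncard + (S ∩ G.vertexBoundary X).ncard + (S ∩ G.exterior X).ncard = S.ncard := by
  have hdiff : S \ X ∩ G.vertexBoundary X = S ∩ G.vertexBoundary X := by
    ext x
    simp only [mem_inter_iff, mem_sdiff]
    exact ⟨fun h => ⟨h.1.1, h.2⟩, fun h => ⟨⟨h.1, h.2.1⟩, h.2⟩⟩
  have hdiff' : (S \ X) \ G.vertexBoundary X = S ∩ G.exterior X := by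
    ext x
    simp only [mem_inter_iff, mem_sdiff, mem_exterior]
    tauto
  rw [← ncard_inter_add_ncard_sdiff_eq_ncard S X,
    ← ncard_inter_add_ncard_sdiff_eq_ncard (S \ X) (G.vertexBoundary X), hdiff, hdiff', add_assoc]

lemma exterior_anti (h : X ⊆ A) : G.exterior A ⊆ G.exterior X := by
  intro x hx
  rw [mem_exterior] at hx ⊢
  refine ⟨fun hxX => hx.1 (h hxX), fun ⟨hxX, u, hu, hux⟩ => ?_⟩
  exact hx.2 ⟨hx.1, u, h hu, hux⟩

lemma vertexBoundary_inter_subset (A F : Set V) :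
    G.vertexBoundary (A ∩ F) ⊆ A ∩ G.vertexBoundary F ∪ G.vertexBoundary A ∩ F ∪
      G.vertexBoundary A ∩ G.vertexBoundary F := by
  rintro w ⟨hw, u, ⟨huA, huF⟩, huw⟩
  have hA : w ∈ A ∨ w ∈ G.vertexBoundary A := or_iff_not_imp_left.2 fun h => ⟨h, u, huA, huw⟩
  have hF : w ∈ F ∨ w ∈ G.vertexBoundary F := or_iff_not_imp_left.2 fun h => ⟨h, u, huF, huw⟩
  simp only [mem_union, mem_inter_iff] at hw ⊢
  tauto

lemma ncard_vertexBoundary_inter_le [Finite V] (A F : Set V) :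
    (G.vertexBoundary (A ∩ F)).ncard ≤ (A ∩ G.vertexBoundary F).ncard +
      (G.vertexBoundary A ∩ F).ncard + (G.vertexBoundary A ∩ G.vertexBoundary F).ncard :=
  (ncard_le_ncard (vertexBoundary_inter_subset A F)).trans <|
    (ncard_union_le _ _).trans (Nat.add_le_add_right (ncard_union_le _ _) _)

lemma vertexBoundary_exterior_subset (X : Set V) :
    G.vertexBoundary (G.exterior X) ⊆ G.vertexBoundary X := by
  rintro w ⟨hw, u, hu, huw⟩
  rw [mem_exterior] at hw hu
  by_contra hwX
  exact hu.2 ⟨hu.1, w, by tauto, huw.symm⟩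

lemma subset_exterior_exterior (X : Set V) : X ⊆ G.exterior (G.exterior X) := fun _ hx =>
  mem_exterior.2 ⟨(disjoint_exterior X).notMem_of_mem_left hx,
    fun h => (disjoint_vertexBoundary X).notMem_of_mem_left hx (vertexBoundary_exterior_subset X h)⟩

lemma IsCutSide.exterior (h : G.IsCutSide X) : G.IsCutSide (G.exterior X) :=
  ⟨h.2, h.1.mono (subset_exterior_exterior X)⟩

lemma IsCutSide.vertexBoundary_nonempty (hG : G.Preconnected) (h : G.IsCutSide X) :
    (G.vertexBoundary X).Nonempty := by
  obtain ⟨a, ha⟩ := h.1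
  obtain ⟨b, hb⟩ := h.2
  obtain ⟨d, -, hd₁, hd₂⟩ := (hG a b).some.exists_boundary_dart X ha (mem_exterior.1 hb).1
  exact ⟨d.snd, hd₂, d.fst, hd₁, d.adj⟩

lemma vertexConnectivity_le (h : G.IsCutSide X) :
    G.vertexConnectivity ≤ (G.vertexBoundary X).ncard :=
  Nat.sInf_le ⟨X, h, rfl⟩

lemma IsAtom.ncard_le (hA : G.IsAtom A) (hF : G.IsFragment F) : A.ncard ≤ F.ncard :=
  hA.2 ▸ Nat.sInf_le ⟨F, hF, rfl⟩

lemma exists_isFragment (h : ∃ X, G.IsCutSide X) : ∃ F, G.IsFragment F := by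
  obtain ⟨X, hX⟩ := h
  obtain ⟨F, hF, hcard⟩ := Nat.sInf_mem (⟨_, X, hX, rfl⟩ :
    {n | ∃ X, G.IsCutSide X ∧ (G.vertexBoundary X).ncard = n}.Nonempty)
  exact ⟨F, hF, hcard⟩

lemma exists_isAtom (h : ∃ X, G.IsCutSide X) : ∃ A, G.IsAtom A := by
  obtain ⟨F, hF⟩ := exists_isFragment h
  obtain ⟨A, hA, hcard⟩ := Nat.sInf_mem (⟨_, F, hF, rfl⟩ :
    {n | ∃ X, G.IsFragment X ∧ X.ncard = n}.Nonempty)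
  exact ⟨A, hA, hcard⟩

section Fragment

variable [Finite V]

lemma IsFragment.vertexBoundary_exterior (hF : G.IsFragment F) :
    G.vertexBoundary (G.exterior F) = G.vertexBoundary F :=
  eq_of_subset_of_ncard_le (vertexBoundary_exterior_subset F)
    (hF.2 ▸ vertexConnectivity_le hF.1.exterior)

lemma IsFragment.exterior (hF : G.IsFragment F) : G.IsFragment (G.exterior F) :=
  ⟨hF.1.exterior, by rw [hF.vertexBoundary_exterior, hF.2]⟩

lemma IsFragment.exterior_exterior (hF : G.IsFragment F) : G.exterior (G.exterior F) = F := by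
  refine Subset.antisymm (fun x hx => ?_) (subset_exterior_exterior F)
  rw [mem_exterior, hF.vertexBoundary_exterior, mem_exterior] at hx
  tauto

lemma IsAtom.ncard_inter_vertexBoundary_le (hA : G.IsAtom A) (hF : G.IsFragment F)
    (hAF : (A ∩ F).Nonempty) :
    (A ∩ G.vertexBoundary F).ncard ≤ (G.vertexBoundary A ∩ G.exterior F).ncard := by
  by_cases hext : (G.exterior A ∩ G.exterior F).Nonempty
  · -- submodularity for the cut side `ext A ∩ ext F`, whose exterior contains `ext (ext A) = A`
    have hcut : G.IsCutSide (G.exterior A ∩ G.exterior F) :=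
      ⟨hext, hA.1.1.1.mono <| hA.1.exterior_exterior.symm.subset.trans <|
        exterior_anti inter_subset_left⟩
    have hκ := vertexConnectivity_le hcut
    have hbd := ncard_vertexBoundary_inter_le (G := G) (G.exterior A) (G.exterior F)
    rw [hA.1.vertexBoundary_exterior, hF.vertexBoundary_exterior] at hbd
    have hsplit := ncard_inter_add_ncard_inter_vertexBoundary_add_ncard_inter_exterior
      (G := G) (G.vertexBoundary F) A
    have hκF := hF.2
    simp only [inter_comm] at *
    omega
  · -- `|A| ≤ |ext F|` as `ext F` is a fragment, while `A` also meets `F`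
    have hsize := hA.ncard_le hF.exterior
    have hsplitA := ncard_inter_add_ncard_inter_vertexBoundary_add_ncard_inter_exterior
      (G := G) A F
    have hsplitF := ncard_inter_add_ncard_inter_vertexBoundary_add_ncard_inter_exterior
      (G := G) (G.exterior F) A
    have hempty : (G.exterior A ∩ G.exterior F).ncard = 0 := by
      rw [not_nonempty_iff_eq_empty.1 hext, ncard_empty]
    have hpos : 0 < (A ∩ F).ncard := (ncard_pos (toFinite _)).2 hAF
    simp only [inter_comm] at *
    omega

lemma IsAtom.subset_of_inter_nonempty (hA : G.IsAtom A) (hF : G.IsFragment F)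
    (hAF : (A ∩ F).Nonempty) : A ⊆ F := by
  have hcut : G.IsCutSide (A ∩ F) := ⟨hAF, hF.1.2.mono (exterior_anti inter_subset_right)⟩
  have hbd : (G.vertexBoundary (A ∩ F)).ncard ≤ G.vertexConnectivity := by
    have hsplit := ncard_inter_add_ncard_inter_vertexBoundary_add_ncard_inter_exterior
      (G := G) (G.vertexBoundary A) F
    have := ncard_vertexBoundary_inter_le (G := G) A F
    have := hA.ncard_inter_vertexBoundary_le hF hAF
    have := hA.1.2
    omega
  have hfrag : G.IsFragment (A ∩ F) := ⟨hcut, hbd.antisymm (vertexConnectivity_le hcut)⟩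
  have hAF_eq : A ∩ F = A := eq_of_subset_of_ncard_le inter_subset_left (hA.ncard_le hfrag)
  exact hAF_eq ▸ inter_subset_right

lemma IsAtom.eq_of_inter_nonempty (hA : G.IsAtom A) (hB : G.IsAtom B) (h : (A ∩ B).Nonempty) :
    A = B :=
  (hA.subset_of_inter_nonempty hB.1 h).antisymm
    (hB.subset_of_inter_nonempty hA.1 (inter_comm A B ▸ h))

lemma IsAtom.subset_vertexBoundary (hA : G.IsAtom A) (hB : G.IsAtom B)
    (h : (B ∩ G.vertexBoundary A).Nonempty) : B ⊆ G.vertexBoundary A := by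
  obtain ⟨v, hvB, hvA⟩ := h
  intro x hx
  by_contra hxA
  by_cases hxA' : x ∈ A
  · exact (disjoint_vertexBoundary A).notMem_of_mem_left
      (hB.eq_of_inter_nonempty hA ⟨x, hx, hxA'⟩ ▸ hvB) hvA
  · exact (disjoint_vertexBoundary_exterior A).notMem_of_mem_left hvA
      (hB.subset_of_inter_nonempty hA.1.exterior ⟨x, hx, mem_exterior.2 ⟨hxA', hxA⟩⟩ hvB)

lemma IsAtom.ncard_neighborSet_add_one_le {a : V} (hA : G.IsAtom A) (ha : a ∈ A) :
    (G.neighborSet a).ncard + 1 ≤ G.atomSize + G.vertexConnectivity := by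
  have hsub : insert a (G.neighborSet a) ⊆ A ∪ G.vertexBoundary A := by
    rintro x (rfl | hx)
    · exact Or.inl ha
    · exact (em (x ∈ A)).imp id fun h => ⟨h, a, ha, hx⟩
  calc (G.neighborSet a).ncard + 1 = (insert a (G.neighborSet a)).ncard :=
        (ncard_insert_of_notMem (by simp) (toFinite _)).symm
    _ ≤ (A ∪ G.vertexBoundary A).ncard := ncard_le_ncard hsub
    _ ≤ A.ncard + (G.vertexBoundary A).ncard := ncard_union_le _ _
    _ = G.atomSize + G.vertexConnectivity := by rw [hA.2, hA.1.2]

lemma IsAtom.vertexBoundary_ne (hA : G.IsAtom A) (hB : G.IsAtom B) :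
    G.vertexBoundary A ≠ B := by
  intro hAB
  have hdisj : Disjoint A B := hAB ▸ disjoint_vertexBoundary A
  obtain ⟨v, hvB⟩ := hB.1.1.1
  obtain ⟨-, u, huA, huv⟩ : v ∈ G.vertexBoundary A := hAB ▸ hvB
  have huB : u ∈ G.vertexBoundary B := ⟨hdisj.notMem_of_mem_left huA, v, hvB, huv.symm⟩
  have hAB' : A = G.vertexBoundary B := eq_of_subset_of_ncard_le
    (hB.subset_vertexBoundary hA ⟨u, huA, huB⟩) (by rw [hB.1.2, ← hA.1.2, hAB, hA.2, hB.2])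
  have hext : G.exterior A = G.exterior B := by rw [exterior, exterior, hAB, ← hAB', union_comm]
  have hBA : B = A := by
    rw [← hAB, ← hA.1.vertexBoundary_exterior, hext, hB.1.vertexBoundary_exterior, ← hAB']
  obtain ⟨a, ha⟩ := hA.1.1.1
  exact hdisj.notMem_of_mem_left ha (hBA ▸ ha)

end Fragment

section Automorphism

lemma vertexBoundary_image (φ : G ≃g G') (X : Set V) :
    G'.vertexBoundary (φ '' X) = φ '' G.vertexBoundary X := by
  ext w
  obtain ⟨w, rfl⟩ := φ.surjective w
  simp only [vertexBoundary, mem_ofPred_eq, φ.injective.mem_set_image, exists_mem_image,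
    φ.map_adj_iff]

lemma exterior_image (φ : G ≃g G') (X : Set V) :
    G'.exterior (φ '' X) = φ '' G.exterior X := by
  rw [exterior, exterior, vertexBoundary_image, ← image_union, image_compl_eq φ.bijective]

lemma IsFragment.image (φ : G ≃g G) (h : G.IsFragment X) : G.IsFragment (φ '' X) :=
  ⟨⟨h.1.1.image φ, exterior_image φ X ▸ h.1.2.image φ⟩,
    by rw [vertexBoundary_image, ncard_image_of_injective _ φ.injective, h.2]⟩

lemma IsAtom.image (φ : G ≃g G) (h : G.IsAtom X) : G.IsAtom (φ '' X) :=
  ⟨h.1.image φ, by rw [ncard_image_of_injective _ φ.injective, h.2]⟩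

lemma IsAtom.exists_isAtom_mem (hA : G.IsAtom A) (htrans : G.IsVertexTransitive) (v : V) :
    ∃ B, G.IsAtom B ∧ v ∈ B := by
  obtain ⟨a, ha⟩ := hA.1.1.1
  obtain ⟨φ, hφ⟩ := htrans a v
  exact ⟨φ '' A, hA.image φ, a, ha, hφ⟩

variable [Finite V]

lemma two_mul_atomSize_le (hG : G.Preconnected) (htrans : G.IsVertexTransitive)
    (hA : G.IsAtom A) : 2 * G.atomSize ≤ G.vertexConnectivity := by
  obtain ⟨v, hv⟩ := hA.1.1.vertexBoundary_nonempty hG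
  obtain ⟨B, hB, hvB⟩ := hA.exists_isAtom_mem htrans v
  have hBA := hA.subset_vertexBoundary hB ⟨v, hvB, hv⟩
  obtain ⟨w, hw, hwB⟩ := not_subset.1 fun h => hA.vertexBoundary_ne hB (h.antisymm hBA)
  obtain ⟨C, hC, hwC⟩ := hA.exists_isAtom_mem htrans w
  have hCA := hA.subset_vertexBoundary hC ⟨w, hwC, hw⟩
  have hBC : Disjoint B C := Set.disjoint_left.2 fun x hxB hxC =>
    hwB (hB.eq_of_inter_nonempty hC ⟨x, hxB, hxC⟩ ▸ hwC)
  calc 2 * G.atomSize = (B ∪ C).ncard := by rw [ncard_union_eq hBC, hB.2, hC.2, two_mul]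
    _ ≤ (G.vertexBoundary A).ncard := ncard_le_ncard (union_subset hBA hCA)
    _ = G.vertexConnectivity := hA.1.2

theorem two_mul_ncard_neighborSet_add_one_le_three_mul_vertexConnectivity
    (hG : G.Preconnected) (htrans : G.IsVertexTransitive) (hcut : ∃ X, G.IsCutSide X) (v : V) :
    2 * ((G.neighborSet v).ncard + 1) ≤ 3 * G.vertexConnectivity := by
  obtain ⟨A, hA⟩ := exists_isAtom hcut
  obtain ⟨B, hB, hvB⟩ := hA.exists_isAtom_mem htrans v
  have := hB.ncard_neighborSet_add_one_le hvB
  have := two_mul_atomSize_le hG htrans hB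
  omega

end Automorphism

lemma Hom.dist_map_le (f : G →g G') {u v : V} (h : G.Reachable u v) :
    G'.dist (f u) (f v) ≤ G.dist u v := by
  obtain ⟨p, hp⟩ := h.exists_walk_length_eq_dist
  exact hp ▸ (dist_le (p.map f)).trans_eq (p.length_map f)

lemma Iso.dist_map (φ : G ≃g G') (u v : V) : G'.dist (φ u) (φ v) = G.dist u v := by
  by_cases h : G.Reachable u v
  · refine (Hom.dist_map_le φ.toHom h).antisymm ?_
    simpa using Hom.dist_map_le φ.symm.toHom (u := φ u) (v := φ v) (Iso.reachable_iff.2 h)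
  · rw [dist_eq_zero_of_not_reachable h,
      dist_eq_zero_of_not_reachable (mt Iso.reachable_iff.1 h)]

lemma vertexBoundary_setOf_dist_le_subset (hG : G.Connected) (v : V) (j : ℕ) :
    G.vertexBoundary {u | G.dist v u ≤ j} ⊆ G.sphere v (j + 1) := by
  rintro w ⟨hw, u, hu, huw⟩
  have := hG.dist_triangle (u := v) (v := u) (w := w)
  rw [dist_eq_one_iff_adj.2 huw] at this
  simp only [mem_ofPred_eq] at hw hu
  exact (by omega : G.dist v w = j + 1)

lemma isCutSide_setOf_dist_le (hG : G.Connected) {v u : V} {j : ℕ} (h : j + 1 < G.dist v u) :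
    G.IsCutSide {w | G.dist v w ≤ j} := by
  refine ⟨⟨v, by simp⟩, u, mem_exterior.2 ⟨fun hu => ?_, fun hu => ?_⟩⟩
  · simp only [mem_ofPred_eq] at hu
    omega
  · have : G.dist v u = j + 1 := vertexBoundary_setOf_dist_le_subset hG v j hu
    omega

lemma vertexConnectivity_le_ncard_sphere [Finite V] (hG : G.Connected) {v u : V} {j : ℕ}
    (h : j + 1 < G.dist v u) : G.vertexConnectivity ≤ (G.sphere v (j + 1)).ncard :=
  (vertexConnectivity_le (isCutSide_setOf_dist_le hG h)).trans
    (ncard_le_ncard (vertexBoundary_setOf_dist_le_subset hG v j))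

lemma neighborSet_power_one (hG : G.Connected) (v : V) :
    (G.power 1).neighborSet v = G.neighborSet v := by
  ext u
  simp only [mem_neighborSet, power]
  exact ⟨fun ⟨hne, h⟩ => dist_eq_one_iff_adj.1 (by have := hG.pos_dist_of_ne hne; omega),
    fun h => ⟨h.ne, (dist_eq_one_iff_adj.2 h).le⟩⟩

lemma neighborSet_power_succ (v : V) (k : ℕ) :
    (G.power (k + 1)).neighborSet v = (G.power k).neighborSet v ∪ G.sphere v (k + 1) := by
  ext u
  simp only [mem_neighborSet, power, sphere, mem_union, mem_ofPred_eq]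
  refine ⟨fun ⟨hne, h⟩ => ?_, ?_⟩
  · by_cases hk : G.dist v u ≤ k
    · exact Or.inl ⟨hne, hk⟩
    · exact Or.inr (by omega)
  · rintro (⟨hne, h⟩ | h)
    · exact ⟨hne, by omega⟩
    · exact ⟨by rintro rfl; simp at h, h.le⟩

lemma ncard_neighborSet_add_mul_vertexConnectivity_le [Finite V] (hG : G.Connected) {v u : V}
    {k : ℕ} (hk : k + 1 < G.dist v u) :
    (G.neighborSet v).ncard + k * G.vertexConnectivity ≤
      ((G.power (k + 1)).neighborSet v).ncard := by
  induction k with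
  | zero => simp [neighborSet_power_one hG]
  | succ k ih =>
    have hdisj : Disjoint ((G.power (k + 1)).neighborSet v) (G.sphere v (k + 1 + 1)) :=
      Set.disjoint_left.2 fun w hw hw' => by
        simp only [mem_neighborSet, power, sphere, mem_ofPred_eq] at hw hw'
        omega
    rw [neighborSet_power_succ, ncard_union_eq hdisj]
    have := ih (by omega)
    have := vertexConnectivity_le_ncard_sphere hG hk
    rw [add_mul, one_mul]
    omega

end SimpleGraph

open SimpleGraph in
theorem vertex_transitive_power_degree {V : Type*} [Fintype V] (G : SimpleGraph V) (d k : ℕ)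
    (hconn : G.Connected) (hreg : ∀ v : V, (G.neighborSet v).ncard = d)
    (htrans : ∀ u v : V, ∃ φ : G ≃g G, φ u = v)
    (hk : 0 < k) (hdiam : ∃ x y : V, k < G.dist x y) :
    (∀ v : V, ((2 * k + 1) * (d + 1) / 3 - 1 : ℝ) ≤ ((G.power k).neighborSet v).ncard) ∧
    ((2 * k + 1) * (d + 1) / 3 - 1 : ℝ) ≤
      (∑ v : V, (((G.power k).neighborSet v).ncard : ℝ)) / (Fintype.card V) := by
  obtain ⟨x, y, hxy⟩ := hdiam
  have hκ : 2 * (d + 1) ≤ 3 * G.vertexConnectivity := hreg x ▸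
    two_mul_ncard_neighborSet_add_one_le_three_mul_vertexConnectivity hconn.preconnected htrans
      ⟨_, isCutSide_setOf_dist_le (j := 0) hconn (by omega : 0 + 1 < G.dist x y)⟩ x
  have hdeg (v : V) : ((2 * k + 1) * (d + 1) / 3 - 1 : ℝ) ≤ ((G.power k).neighborSet v).ncard := by
    obtain ⟨φ, rfl⟩ := htrans x v
    obtain ⟨j, rfl⟩ := Nat.exists_eq_add_one_of_ne_zero hk.ne'
    have hnbhd : d + j * G.vertexConnectivity ≤ ((G.power (j + 1)).neighborSet (φ x)).ncard :=
      hreg (φ x) ▸ ncard_neighborSet_add_mul_vertexConnectivity_le hconn (u := φ y)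
        (by rw [Iso.dist_map]; exact hxy)
    have hκ' : (j : ℝ) * (2 * (d + 1)) ≤ j * (3 * G.vertexConnectivity) :=
      mul_le_mul_of_nonneg_left (by exact_mod_cast hκ) (Nat.cast_nonneg j)
    have hnbhd' : (d + j * G.vertexConnectivity : ℝ) ≤
        ((G.power (j + 1)).neighborSet (φ x)).ncard := by exact_mod_cast hnbhd
    push_cast
    linarith
  refine ⟨hdeg, ?_⟩
  have : Nonempty V := ⟨x⟩
  rw [le_div_iff₀ (by exact_mod_cast Fintype.card_pos)]
  simpa [mul_comm] using Finset.card_nsmul_le_sum Finset.univ _ _ fun v _ => hdeg v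
end
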